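/- Let K be a field and let a, b, c, d ∈ K. If there exists a nonzero homogeneous polynomial L of degree 1 in MvPolynomial (Fin 3) K that divides the polynomial a•x²y + b•y²z + c•z²x + d•xyz, then a*b*c = 0. -/

import Mathlib

open MvPolynomial

theorem MvPolynomial.IsHomogeneous.exists_sum_smul_X_eq {σ R : Type*} [CommSemiring R]
    [Fintype σ] {L : MvPolynomial σ R} (hL : L.IsHomogeneous 1) :
    ∃ w : σ → R, ∑ i, w i • X i = L := by
  rw [← mem_homogeneousSubmodule, homogeneousSubmodule_one_eq_span_X] at hL
  exact Submodule.mem_span_range_iff_exists_fun R |>.mp hL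

/- Three points of the plane give `αβ = βγ = γα = 0`, so the plane is a coordinate plane,
and the cubic restricted to it is one of the monomials `a x²y`, `b y²z`, `c z²x`. -/
theorem mul_mul_eq_zero_of_vanishes_on_plane {K : Type*} [CommRing K] [NoZeroDivisors K]
    (a b c d α β γ : K)
    (h : ∀ x y z : K, α * x + β * y + γ * z = 0 →
      a * x ^ 2 * y + b * y ^ 2 * z + c * z ^ 2 * x + d * x * y * z = 0) :
    a * b * c = 0 := by
  by_contra habc
  obtain ⟨⟨ha, hb⟩, hc⟩ := mul_ne_zero_iff.mp habc |>.imp_left mul_ne_zero_iff.mp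
  have hαβ : β = 0 ∨ α = 0 := by simpa [ha] using h (-β) α 0 (by ring)
  have hβγ : γ = 0 ∨ β = 0 := by simpa [hb] using h 0 γ (-β) (by ring)
  have hγα : α = 0 ∨ γ = 0 := by simpa [hc] using h γ 0 (-α) (by ring)
  have hxy : α = 0 → β = 0 → a = 0 := fun hα hβ ↦ by simpa using h 1 1 0 (by simp [hα, hβ])
  have hyz : β = 0 → γ = 0 → b = 0 := fun hβ hγ ↦ by simpa using h 0 1 1 (by simp [hβ, hγ])
  have hzx : γ = 0 → α = 0 → c = 0 := fun hγ hα ↦ by simpa using h 1 0 1 (by simp [hγ, hα])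
  tauto

theorem stmt_1 (K : Type*) [Field K] (a b c d : K)
    (h : ∃ L : MvPolynomial (Fin 3) K, L ≠ 0 ∧ L.IsHomogeneous 1 ∧
      L ∣ (a • (X 0 ^ 2 * X 1) + b • (X 1 ^ 2 * X 2) +
            c • (X 2 ^ 2 * X 0) + d • (X 0 * X 1 * X 2))) :
    a * b * c = 0 := by
  obtain ⟨L, -, hL, Q, hQ⟩ := h
  obtain ⟨w, rfl⟩ := hL.exists_sum_smul_X_eq
  refine mul_mul_eq_zero_of_vanishes_on_plane a b c d (w 0) (w 1) (w 2) fun x y z hxyz ↦ ?_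
  have := congrArg (eval ![x, y, z]) hQ
  simpa [Fin.sum_univ_three, hxyz, mul_assoc] using this
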